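/- Let V be a weighted digraph with φ_{k-1} - φ_k > φ_k - φ_{k+1}, let F be a minimal-weight spanning k-forest, and let E be an atom of the algebra A_k. Then there exists a minimal-weight spanning k-forest G in which the outgoing arcs of all vertices of E coincide with those in F, and no arc of G has its terminus in E and origin outside E. -/

import Mathlib

open Relation

/-- The arc relation of a functional digraph: `F i = some j` means there is an arc `i → j`. -/
def Arc {V : Type*} (F : V → Option V) (i j : V) : Prop := F i = some j

/-- A directed forest: a functional digraph (out-degree ≤ 1) without directed circuits. -/
def IsForest {V : Type*} (F : V → Option V) : Prop :=
  ∀ i, ¬ Relation.TransGen (Arc F) i i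

/-- `j` is accessible from `i` by a directed walk. -/
def Reaches {V : Type*} (F : V → Option V) (i j : V) : Prop :=
  Relation.ReflTransGen (Arc F) i j

open Classical in
/-- The `D`-exchange of `F` by `G`: replace the outgoing arcs (in `F`) of vertices of `D`
by their outgoing arcs in `G`. -/
noncomputable def exchange {V : Type*} (D : Set V) (F G : V → Option V) : V → Option V :=
  fun i => if i ∈ D then G i else F i

/-- The set of vertices of the tree of the forest `F` with root `r`. -/
def treeSet {V : Type*} (F : V → Option V) (r : V) : Set V := {i | Reaches F i r}

section Weighted

variable {V : Type*} [Fintype V] [DecidableEq V]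

/-- A spanning forest of the digraph with arc relation `A`. -/
def IsSpanningForest (A : V → V → Prop) (F : V → Option V) : Prop :=
  IsForest F ∧ ∀ i j, F i = some j → A i j

/-- The number of trees (= roots) of a forest. -/
def numTrees (F : V → Option V) : ℕ :=
  (Finset.univ.filter (fun i => F i = none)).card

/-- The weight of a forest: the sum of the weights of its arcs. -/
noncomputable def weight (w : V → V → ℝ) (F : V → Option V) : ℝ :=
  ∑ i, (F i).elim 0 (w i)

/-- `F` is a minimal-weight (extreme) spanning forest with `k` trees. -/
def ExtremeForest (A : V → V → Prop) (w : V → V → ℝ) (k : ℕ) (F : V → Option V) : Prop :=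
  IsSpanningForest A F ∧ numTrees F = k ∧
    ∀ G, IsSpanningForest A G → numTrees G = k → weight w F ≤ weight w G

/-- `φ_k`: the minimum weight of a spanning forest with exactly `k` trees. -/
noncomputable def phi (A : V → V → Prop) (w : V → V → ℝ) (k : ℕ) : ℝ :=
  sInf (weight w '' {F | IsSpanningForest A F ∧ numTrees F = k})

end Weighted

section Algebras

variable {V : Type*} [Fintype V] [DecidableEq V]

/-- The generating family of `A_k`: vertex sets of trees of minimal-weight spanning
`k`-forests. -/
def genSets (A : V → V → Prop) (w : V → V → ℝ) (k : ℕ) : Set (Set V) :=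
  {S | ∃ F r, ExtremeForest A w k F ∧ F r = none ∧ S = treeSet F r}

/-- The algebra `A_k` of subsets of the vertex set generated by the vertex sets of trees of
minimal-weight spanning `k`-forests. -/
noncomputable def alg (A : V → V → Prop) (w : V → V → ℝ) (k : ℕ) : MeasurableSpace V :=
  MeasurableSpace.generateFrom (genSets A w k)

/-- `E` is an elementary set (atom) of the algebra `m`. -/
def IsElementary (m : MeasurableSpace V) (E : Set V) : Prop :=
  @MeasurableSet V m E ∧ E.Nonempty ∧ ∀ S, @MeasurableSet V m S → S ⊆ E → S = ∅ ∨ S = E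

/-- `i` is a marked vertex of level `k`: a root of some minimal-weight spanning `k`-forest. -/
def IsMarked (A : V → V → Prop) (w : V → V → ℝ) (k : ℕ) (i : V) : Prop :=
  ∃ F, ExtremeForest A w k F ∧ F i = none

end Algebras

/-!
Strict convexity `φ_{k-1} - φ_k > φ_k - φ_{k+1}` forces every minimal `k`-forest `H` to have
exactly one root in each tree `S` of every minimal `k`-forest `K`: if `S` held no root of `H`,
exchanging the arcs of `H` and `K` on `S` would give a `(k+1)`-forest and a `(k-1)`-forest of
total weight `2 φ_k`. With exactly one root in `S`, giving the vertices outside `S` their arcs in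
`K` turns `H` into a `k`-forest, and the complementary exchange into another one, of total weight
`2 φ_k`; so both are minimal.

An atom `E` of `A_k` lies in one tree of each minimal `k`-forest, and any vertex `i ∉ E` is cut off
from `E` by such a tree `S`. If a minimal `k`-forest `G` has an arc `i → j` with `j ∈ E`, the
exchange of `G` with `K` outside `S` keeps the arcs leaving `E`, deletes this arc and creates no
new arc into `E`. So among the minimal `k`-forests agreeing with `F` on `E`, one with an inclusion-
minimal set of tails of arcs into `E` has no such arc.
-/

section Forests

variable {V : Type*}

theorem Reaches.eq_of_root {F : V → Option V} {r x : V} (hr : F r = none)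
    (h : Reaches F r x) : x = r := by
  rcases h.cases_head with h | ⟨c, hc, _⟩
  · exact h.symm
  · simp [Arc, hr] at hc

theorem Reaches.root_unique {F : V → Option V} {i r r' : V} (hr : F r = none)
    (hr' : F r' = none) (h : Reaches F i r) (h' : Reaches F i r') : r = r' := by
  induction h using ReflTransGen.head_induction_on with
  | refl => exact (h'.eq_of_root hr).symm
  | head harc _ ih =>
    rcases h'.cases_head with rfl | ⟨c, hc, hrest⟩
    · simp [Arc, hr'] at harc
    · cases (harc : _ = _).symm.trans hc
      exact ih hrest

theorem IsForest.exists_root [Finite V] {F : V → Option V} (hF : IsForest F) (i : V) :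
    ∃ r, Reaches F i r ∧ F r = none := by
  have : IsTrans V (flip (TransGen (Arc F))) := ⟨fun _ _ _ h₁ h₂ => h₂.trans h₁⟩
  have : Std.Irrefl (flip (TransGen (Arc F))) := ⟨hF⟩
  induction i using (Finite.wellFounded_of_trans_of_irrefl (flip (TransGen (Arc F)))).induction
    with | _ i ih => ?_
  cases hFi : F i with
  | none => exact ⟨i, .refl, hFi⟩
  | some j =>
    obtain ⟨r, hjr, hr⟩ := ih j (.single hFi)
    exact ⟨r, .head hFi hjr, hr⟩

theorem mem_treeSet_iff_of_arc {F : V → Option V} {r i j : V} (hr : F r = none)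
    (harc : Arc F i j) : i ∈ treeSet F r ↔ j ∈ treeSet F r := by
  refine ⟨fun hi => ?_, fun hj => .head harc hj⟩
  rcases (hi : Reaches F i r).cases_head with rfl | ⟨c, hc, hrest⟩
  · simp [Arc, hr] at harc
  · cases (hc : _ = _).symm.trans harc
    exact hrest

end Forests

section Exchange

variable {V : Type*} {D : Set V} {F G : V → Option V}

theorem exchange_of_mem {i : V} (hi : i ∈ D) : exchange D F G i = G i := by
  simp [exchange, hi]

theorem exchange_of_notMem {i : V} (hi : i ∉ D) : exchange D F G i = F i := by
  simp [exchange, hi]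

theorem transGen_arc_exchange_of_mem (hD : ∀ i ∈ D, ∀ j, G i = some j → j ∈ D) {x y : V}
    (h : TransGen (Arc (exchange D F G)) x y) (hx : x ∈ D) : TransGen (Arc G) x y ∧ y ∈ D := by
  induction h with
  | single h =>
    rw [Arc, exchange_of_mem hx] at h
    exact ⟨.single h, hD _ hx _ h⟩
  | tail _ h ih =>
    obtain ⟨hxb, hb⟩ := ih
    rw [Arc, exchange_of_mem hb] at h
    exact ⟨hxb.tail h, hD _ hb _ h⟩

theorem transGen_arc_exchange_of_notMem (hD : ∀ i ∈ D, ∀ j, G i = some j → j ∈ D) {x y : V}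
    (h : TransGen (Arc (exchange D F G)) x y) (hx : x ∉ D) : TransGen (Arc F) x y ∨ y ∈ D := by
  induction h with
  | single h =>
    rw [Arc, exchange_of_notMem hx] at h
    exact .inl (.single h)
  | @tail b c _ h ih =>
    by_cases hb : b ∈ D
    · rw [Arc, exchange_of_mem hb] at h
      exact .inr (hD _ hb _ h)
    · rw [Arc, exchange_of_notMem hb] at h
      exact ih.imp (·.tail h) (absurd · hb)

theorem IsForest.exchange (hF : IsForest F) (hG : IsForest G)
    (hD : ∀ i ∈ D, ∀ j, G i = some j → j ∈ D) : IsForest (exchange D F G) := by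
  intro i hcyc
  by_cases hi : i ∈ D
  · exact hG i (transGen_arc_exchange_of_mem hD hcyc hi).1
  · exact (transGen_arc_exchange_of_notMem hD hcyc hi).elim (hF i) hi

theorem IsSpanningForest.exchange {A : V → V → Prop} (hF : IsSpanningForest A F)
    (hG : IsSpanningForest A G) (hD : ∀ i ∈ D, ∀ j, G i = some j → j ∈ D) :
    IsSpanningForest A (exchange D F G) := by
  refine ⟨hF.1.exchange hG.1 hD, fun i j h => ?_⟩
  by_cases hi : i ∈ D
  · rw [exchange_of_mem hi] at h; exact hG.2 i j h
  · rw [exchange_of_notMem hi] at h; exact hF.2 i j h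

theorem isSpanningForest_exchange_treeSet {A : V → V → Prop} {H K : V → Option V} {r : V}
    (hH : IsSpanningForest A H) (hK : IsSpanningForest A K) (hr : K r = none) :
    IsSpanningForest A (exchange (treeSet K r) H K) :=
  IsSpanningForest.exchange hH hK fun _ hi _ hij => (mem_treeSet_iff_of_arc hr hij).mp hi

theorem isSpanningForest_exchange_compl_treeSet {A : V → V → Prop} {H K : V → Option V} {r : V}
    (hH : IsSpanningForest A H) (hK : IsSpanningForest A K) (hr : K r = none) :
    IsSpanningForest A (exchange (treeSet K r)ᶜ H K) :=
  IsSpanningForest.exchange hH hK fun _ hi _ hij hj => hi ((mem_treeSet_iff_of_arc hr hij).mpr hj)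

end Exchange

section Counting

variable {V : Type*}

def roots (F : V → Option V) : Set V := {i | F i = none}

theorem roots_exchange (D : Set V) (F G : V → Option V) :
    roots (exchange D F G) = roots G ∩ D ∪ roots F \ D := by
  ext i
  by_cases hi : i ∈ D <;> simp [roots, exchange, hi]

theorem roots_inter_treeSet {K : V → Option V} {r : V} (hr : K r = none) :
    roots K ∩ treeSet K r = {r} := by
  ext i
  refine ⟨fun ⟨hi, hir⟩ => (hir : Reaches K i r).eq_of_root hi ▸ rfl, ?_⟩
  rintro rfl
  exact ⟨hr, .refl⟩

variable [Fintype V]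

theorem numTrees_eq_ncard_roots (F : V → Option V) :
    numTrees F = (roots F).ncard := by
  rw [numTrees, ← Set.ncard_coe_finset]
  congr 1
  ext i
  simp [roots]

theorem numTrees_exchange (D : Set V) (F G : V → Option V) :
    numTrees (exchange D F G) = (roots G ∩ D).ncard + (roots F \ D).ncard := by
  rw [numTrees_eq_ncard_roots, roots_exchange,
    Set.ncard_union_eq (Set.disjoint_sdiff_right.mono_left Set.inter_subset_right)]

theorem weight_exchange_add_weight_exchange_compl (w : V → V → ℝ) (D : Set V)
    (F G : V → Option V) :
    weight w (exchange D F G) + weight w (exchange Dᶜ F G) = weight w F + weight w G := by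
  simp only [weight, ← Finset.sum_add_distrib]
  refine Finset.sum_congr rfl fun i _ => ?_
  by_cases hi : i ∈ D
  · rw [exchange_of_mem hi, exchange_of_notMem (Set.notMem_compl_iff.mpr hi), add_comm]
  · rw [exchange_of_notMem hi, exchange_of_mem (Set.mem_compl hi)]

end Counting

section TreeExchange

variable {V : Type*} [Fintype V] {A : V → V → Prop} {w : V → V → ℝ} {k j : ℕ}
  {H K : V → Option V} {r : V}

theorem numTrees_exchange_treeSet_add (hr : K r = none) :
    numTrees (exchange (treeSet K r) H K) + (roots H ∩ treeSet K r).ncard = numTrees H + 1 := by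
  rw [numTrees_exchange, roots_inter_treeSet hr, Set.ncard_singleton, numTrees_eq_ncard_roots,
    ← Set.ncard_inter_add_ncard_sdiff_eq_ncard (roots H) (treeSet K r)]
  ring

theorem numTrees_exchange_compl_treeSet_add (hr : K r = none) :
    numTrees (exchange (treeSet K r)ᶜ H K) + 1 = numTrees K + (roots H ∩ treeSet K r).ncard := by
  rw [numTrees_exchange, ← Set.sdiff_eq, Set.sdiff_compl, numTrees_eq_ncard_roots,
    ← Set.ncard_inter_add_ncard_sdiff_eq_ncard (roots K) (treeSet K r), roots_inter_treeSet hr,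
    Set.ncard_singleton]
  ring

theorem phi_le_weight {G : V → Option V} (hG : IsSpanningForest A G) (hn : numTrees G = j) :
    phi A w j ≤ weight w G :=
  csInf_le ((Set.toFinite _).image _).bddBelow (Set.mem_image_of_mem _ ⟨hG, hn⟩)

theorem ExtremeForest.weight_eq_phi (hH : ExtremeForest A w k H) : weight w H = phi A w k := by
  refine le_antisymm (le_csInf ⟨_, Set.mem_image_of_mem _ ⟨hH.1, hH.2.1⟩⟩ ?_)
    (phi_le_weight hH.1 hH.2.1)
  rintro _ ⟨G, ⟨hG, hGn⟩, rfl⟩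
  exact hH.2.2 G hG hGn

theorem ExtremeForest.roots_inter_treeSet_nonempty
    (hlt : phi A w (k - 1) - phi A w k > phi A w k - phi A w (k + 1))
    (hH : ExtremeForest A w k H) (hK : ExtremeForest A w k K) (hr : K r = none) :
    (roots H ∩ treeSet K r).Nonempty := by
  by_contra hempty
  have hzero : (roots H ∩ treeSet K r).ncard = 0 := by
    rw [Set.not_nonempty_iff_eq_empty.mp hempty, Set.ncard_empty]
  have hP := numTrees_exchange_treeSet_add (H := H) hr
  have hQ := numTrees_exchange_compl_treeSet_add (H := H) hr
  rw [hH.2.1] at hP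
  rw [hK.2.1] at hQ
  have hwP : phi A w (k + 1) ≤ weight w (exchange (treeSet K r) H K) :=
    phi_le_weight (isSpanningForest_exchange_treeSet hH.1 hK.1 hr) (by omega)
  have hwQ : phi A w (k - 1) ≤ weight w (exchange (treeSet K r)ᶜ H K) :=
    phi_le_weight (isSpanningForest_exchange_compl_treeSet hH.1 hK.1 hr) (by omega)
  linarith [weight_exchange_add_weight_exchange_compl w (treeSet K r) H K, hH.weight_eq_phi,
    hK.weight_eq_phi]

/-- Pigeonhole: each of the `k` trees of `K` contains at least one of the `k` roots of `H`. -/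
theorem ExtremeForest.ncard_roots_inter_treeSet
    (hlt : phi A w (k - 1) - phi A w k > phi A w k - phi A w (k + 1))
    (hH : ExtremeForest A w k H) (hK : ExtremeForest A w k K) (hr : K r = none) :
    (roots H ∩ treeSet K r).ncard = 1 := by
  choose root hreach hroot using hK.1.1.exists_root
  have hinj : Set.InjOn root (roots H) := fun a ha b hb hab => by
    refine Set.inj_on_of_surj_on_of_ncard_le (t := roots K) (fun a _ => root a) (fun a _ => hroot a)
      ?_ ?_ ha hb hab
    · intro r' hr'
      obtain ⟨b, hb, hbr'⟩ := hH.roots_inter_treeSet_nonempty hlt hK hr'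
      exact ⟨b, hb, (hreach b).root_unique (hroot b) hr' hbr'⟩
    · rw [← numTrees_eq_ncard_roots, ← numTrees_eq_ncard_roots, hH.2.1, hK.2.1]
  obtain ⟨a, ha⟩ := hH.roots_inter_treeSet_nonempty hlt hK hr
  have hroot_eq : ∀ b ∈ roots H ∩ treeSet K r, root b = r := fun b hb =>
    (hreach b).root_unique (hroot b) hr hb.2
  refine Set.ncard_eq_one.mpr ⟨a, Set.eq_singleton_iff_unique_mem.mpr ⟨ha, fun b hb => ?_⟩⟩
  exact hinj hb.1 ha.1 ((hroot_eq b hb).trans (hroot_eq a ha).symm)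

theorem ExtremeForest.exchange_compl_treeSet
    (hlt : phi A w (k - 1) - phi A w k > phi A w k - phi A w (k + 1))
    (hH : ExtremeForest A w k H) (hK : ExtremeForest A w k K) (hr : K r = none) :
    ExtremeForest A w k (exchange (treeSet K r)ᶜ H K) := by
  have hone := hH.ncard_roots_inter_treeSet hlt hK hr
  have hP := numTrees_exchange_treeSet_add (H := H) hr
  have hQ := numTrees_exchange_compl_treeSet_add (H := H) hr
  rw [hH.2.1] at hP
  rw [hK.2.1] at hQ
  have hwP : phi A w k ≤ weight w (exchange (treeSet K r) H K) :=
    phi_le_weight (isSpanningForest_exchange_treeSet hH.1 hK.1 hr) (by omega)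
  refine ⟨isSpanningForest_exchange_compl_treeSet hH.1 hK.1 hr, by omega, fun G hG hGn => ?_⟩
  linarith [weight_exchange_add_weight_exchange_compl w (treeSet K r) H K, hH.weight_eq_phi,
    hK.weight_eq_phi, phi_le_weight (w := w) hG hGn]

end TreeExchange

theorem subset_or_disjoint_of_measurableSet_generateFrom {α : Type*} {C : Set (Set α)}
    {T : Set α} (hT : ∀ t ∈ C, T ⊆ t ∨ Disjoint T t) {M : Set α}
    (hM : @MeasurableSet α (MeasurableSpace.generateFrom C) M) : T ⊆ M ∨ Disjoint T M := by
  induction M, hM using MeasurableSpace.generateFrom_induction with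
  | hC t ht => exact hT t ht
  | empty => exact .inr (Set.disjoint_empty T)
  | compl t _ ih =>
    exact ih.symm.imp Set.subset_compl_iff_disjoint_right.mpr
      Set.disjoint_compl_right_iff_subset.mpr
  | iUnion s _ ih =>
    by_cases h : ∃ n, T ⊆ s n
    · obtain ⟨n, hn⟩ := h
      exact .inl (hn.trans (Set.subset_iUnion s n))
    · simp only [not_exists] at h
      exact .inr (Set.disjoint_iUnion_right.mpr fun n => (ih n).resolve_left (h n))

section Atoms

variable {V : Type*} [Fintype V] {A : V → V → Prop} {w : V → V → ℝ} {k : ℕ} {E : Set V}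

theorem IsElementary.exists_treeSet_separating (hE : IsElementary (alg A w k) E) {i : V}
    (hi : i ∉ E) :
    ∃ K r, ExtremeForest A w k K ∧ K r = none ∧ E ⊆ treeSet K r ∧ i ∉ treeSet K r := by
  obtain ⟨x, hx⟩ := hE.2.1
  -- `T` is split by no generator, hence by no set of `A_k`; in particular `T ⊆ E`.
  set T := {y | ∀ K r, ExtremeForest A w k K → K r = none → x ∈ treeSet K r → y ∈ treeSet K r}
  have hT : ∀ t ∈ genSets A w k, T ⊆ t ∨ Disjoint T t := by
    rintro _ ⟨K, r, hK, hr, rfl⟩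
    by_cases hxr : x ∈ treeSet K r
    · exact .inl fun y hy => hy K r hK hr hxr
    obtain ⟨r', hxr', hr'⟩ := hK.1.1.exists_root x
    refine .inr (Set.disjoint_left.mpr fun y hy hyr => hxr ?_)
    rwa [(hy K r' hK hr' hxr').root_unique hr' hr hyr] at hxr'
  have hTE : T ⊆ E := (subset_or_disjoint_of_measurableSet_generateFrom hT hE.1).resolve_right
    (Set.not_disjoint_iff.mpr ⟨x, fun _ _ _ _ => id, hx⟩)
  have hiT : i ∉ T := fun h => hi (hTE h)
  simp only [T, Set.mem_ofPred_eq, not_forall] at hiT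
  obtain ⟨K, r, hK, hr, hxr, hir⟩ := hiT
  have hS : @MeasurableSet V (alg A w k) (treeSet K r) :=
    MeasurableSpace.measurableSet_generateFrom ⟨K, r, hK, hr, rfl⟩
  have hEr : E ∩ treeSet K r = E := (hE.2.2 _ (hE.1.inter hS) Set.inter_subset_left).resolve_left
    (Set.nonempty_iff_ne_empty.mp ⟨x, hx, hxr⟩)
  exact ⟨K, r, hK, hr, Set.inter_eq_left.mp hEr, hir⟩

end Atoms

section Incoming

variable {V : Type*} [Fintype V] {A : V → V → Prop} {w : V → V → ℝ} {k : ℕ} {E : Set V}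
  {H : V → Option V}

def incomingTails (E : Set V) (G : V → Option V) : Set V := {i | i ∉ E ∧ ∃ j ∈ E, Arc G i j}

theorem ExtremeForest.exists_incomingTails_ssubset
    (hlt : phi A w (k - 1) - phi A w k > phi A w k - phi A w (k + 1))
    (hE : IsElementary (alg A w k) E) (hH : ExtremeForest A w k H) {i j : V} (hi : i ∉ E)
    (hj : j ∈ E) (hij : Arc H i j) :
    ∃ H', ExtremeForest A w k H' ∧ (∀ e ∈ E, H' e = H e) ∧
      incomingTails E H' ⊂ incomingTails E H := by
  obtain ⟨K, r, hK, hr, hES, hiS⟩ := hE.exists_treeSet_separating hi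
  refine ⟨exchange (treeSet K r)ᶜ H K, hH.exchange_compl_treeSet hlt hK hr,
    fun e he => exchange_of_notMem (not_not.mpr (hES he)), ?_⟩
  have hsub : incomingTails E (exchange (treeSet K r)ᶜ H K) ⊆
      incomingTails E H ∩ treeSet K r := by
    rintro x ⟨hxE, y, hyE, hxy⟩
    by_cases hxS : x ∈ treeSet K r
    · rw [Arc, exchange_of_notMem (not_not.mpr hxS)] at hxy
      exact ⟨⟨hxE, y, hyE, hxy⟩, hxS⟩
    · rw [Arc, exchange_of_mem hxS] at hxy
      exact absurd ((mem_treeSet_iff_of_arc hr hxy).mpr (hES hyE)) hxS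
  exact (Set.ssubset_iff_of_subset (hsub.trans Set.inter_subset_left)).mpr
    ⟨i, ⟨hi, j, hj, hij⟩, fun h => hiS (hsub h).2⟩

end Incoming

theorem elementary_no_incoming_general {V : Type*} [Fintype V]
    (A : V → V → Prop) (w : V → V → ℝ) (k : ℕ)
    (hlt : phi A w (k - 1) - phi A w k > phi A w k - phi A w (k + 1))
    (F : V → Option V) (hF : ExtremeForest A w k F)
    (E : Set V) (hE : IsElementary (alg A w k) E) :
    ∃ G, ExtremeForest A w k G ∧ (∀ i ∈ E, G i = F i) ∧
      ∀ i j, Arc G i j → j ∈ E → i ∈ E := by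
  obtain ⟨G, ⟨hG, hGF⟩, hmin⟩ := (InvImage.wf (incomingTails E) wellFounded_lt).has_min
    {G | ExtremeForest A w k G ∧ ∀ i ∈ E, G i = F i} ⟨F, hF, fun _ _ => rfl⟩
  refine ⟨G, hG, hGF, fun i j hij hj => by_contra fun hi => ?_⟩
  obtain ⟨G', hG', hG'G, hsub⟩ := hG.exists_incomingTails_ssubset hlt hE hi hj hij
  exact hmin G' ⟨hG', fun e he => (hG'G e he).trans (hGF e he)⟩ hsub

/-- Under the strict convexity inequality, for every minimal-weight spanning `k`-forest `F`
and every elementary set `E` of `A_k` there is a minimal-weight spanning `k`-forest `G`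
whose outgoing arcs from vertices of `E` coincide with those of `F`, and into whose `E` no
arc comes from outside. -/
theorem elementary_no_incoming {V : Type*} [Fintype V] [DecidableEq V]
    (A : V → V → Prop) (w : V → V → ℝ) (k : ℕ)
    (hk : 2 ≤ k) (hk' : k + 1 ≤ Fintype.card V)
    (hEx : ∃ F, IsSpanningForest A F ∧ numTrees F = k - 1)
    (hlt : phi A w (k - 1) - phi A w k > phi A w k - phi A w (k + 1))
    (F : V → Option V) (hF : ExtremeForest A w k F)
    (E : Set V) (hE : IsElementary (alg A w k) E) :
    ∃ G, ExtremeForest A w k G ∧ (∀ i ∈ E, G i = F i) ∧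
      ∀ i j, Arc G i j → j ∈ E → i ∈ E :=
  elementary_no_incoming_general A w k hlt F hF E hE
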